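/- Fix C1 > 0, G1 ≥ 0, Z > 0, b1 ∈ ℝ, u0 ∈ ℝ. For an input waveform s : [0,T] → ℝ (continuous), let Φ(s) be the unique solution u1 of C1·u1' + (G1 + 1/Z)·u1 = (1/Z)·s + b1, u1(0) = u0, and define the output current i1 = −(1/Z)·u1 + (1/Z)·s. Then for two continuous inputs s, ŝ, the outputs satisfy sup_{t∈[0,T]} |Φ(s)(t) − Φ(ŝ)(t)| ≤ (1/(1 + Z·G1)) · sup_{t∈[0,T]} |s(t) − ŝ(t)|; in particular the subsystem solve is nonexpansive in the sup norm, and strictly contractive when G1 > 0. -/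

import Mathlib

/-- The WTM subsystem solve is Lipschitz in the incoming waveform with
constant 1/(1+Z·G1) in the sup norm: nonexpansive, and strictly contractive
when G1 > 0. -/
theorem wtm_subsystem_contraction
    (C1 G1 Z b1 u0 T : ℝ)
    (hC1 : 0 < C1) (hG1 : 0 ≤ G1) (hZ : 0 < Z) (hT : 0 ≤ T)
    (s shat u1 u1' uhat1 uhat1' : ℝ → ℝ)
    (hs : ContinuousOn s (Set.Icc 0 T)) (hshat : ContinuousOn shat (Set.Icc 0 T))
    (hd : ∀ t ∈ Set.Icc 0 T, HasDerivAt u1 (u1' t) t)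
    (hdhat : ∀ t ∈ Set.Icc 0 T, HasDerivAt uhat1 (uhat1' t) t)
    (hode : ∀ t ∈ Set.Icc 0 T,
      C1 * u1' t + (G1 + 1 / Z) * u1 t = (1 / Z) * s t + b1)
    (hodehat : ∀ t ∈ Set.Icc 0 T,
      C1 * uhat1' t + (G1 + 1 / Z) * uhat1 t = (1 / Z) * shat t + b1)
    (hinit : u1 0 = u0) (hinithat : uhat1 0 = u0) :
    ∀ t ∈ Set.Icc 0 T,
      |u1 t - uhat1 t| ≤ (1 / (1 + Z * G1)) *
        sSup ((fun t => |s t - shat t|) '' Set.Icc 0 T) := by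
  have ha : 0 < G1 + 1 / Z := by positivity
  set a : ℝ := G1 + 1 / Z with ha_def
  set k : ℝ := a / C1 with hk_def
  have hk : 0 < k := by positivity
  set M : ℝ := sSup ((fun t => |s t - shat t|) '' Set.Icc 0 T) with hM_def
  have hdcont : ContinuousOn (fun τ => s τ - shat τ) (Set.Icc 0 T) := hs.sub hshat
  have hcomp : IsCompact ((fun t => |s t - shat t|) '' Set.Icc 0 T) :=
    isCompact_Icc.image_of_continuousOn hdcont.abs
  have hMle : ∀ τ ∈ Set.Icc (0:ℝ) T, |s τ - shat τ| ≤ M := fun τ hτ =>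
    le_csSup hcomp.bddAbove ⟨τ, hτ, rfl⟩
  have hM0 : 0 ≤ M := le_trans (abs_nonneg _) (hMle 0 ⟨le_rfl, hT⟩)
  set w : ℝ → ℝ := fun τ => u1 τ - uhat1 τ with hw_def
  set d : ℝ → ℝ := fun τ => s τ - shat τ with hd_def
  -- derivative of the difference
  have hw' : ∀ τ ∈ Set.Icc (0:ℝ) T,
      HasDerivAt w ((1 / (Z * C1)) * d τ - k * w τ) τ := by
    intro τ hτ
    have h := (hd τ hτ).sub (hdhat τ hτ)
    have e1 := hode τ hτ
    have e2 := hodehat τ hτ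
    have key : u1' τ - uhat1' τ = (1 / (Z * C1)) * d τ - k * w τ := by
      have hC1' : C1 ≠ 0 := hC1.ne'
      have hZ' : Z ≠ 0 := hZ.ne'
      have e3 : C1 * (u1' τ - uhat1' τ) + a * (u1 τ - uhat1 τ)
          = (1 / Z) * (s τ - shat τ) := by ring_nf; ring_nf at e1 e2; linarith
      rw [ha_def] at e3
      simp only [hk_def, ha_def, hw_def, hd_def]
      field_simp at e3 ⊢
      linarith
    exact key ▸ h
  -- the rescaled function v
  set v : ℝ → ℝ := fun τ => Real.exp (k * τ) * w τ with hv_def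
  have hv' : ∀ τ ∈ Set.Icc (0:ℝ) T,
      HasDerivAt v (Real.exp (k * τ) * ((1 / (Z * C1)) * d τ)) τ := by
    intro τ hτ
    have h1 : HasDerivAt (fun x => Real.exp (k * x)) (Real.exp (k * τ) * k) τ := by
      simpa using ((hasDerivAt_id τ).const_mul k).exp
    have h2 : HasDerivAt (fun y => Real.exp (k * y) * w y) (Real.exp (k * τ) * k * w τ + Real.exp (k * τ) * ((1 / (Z * C1)) * d τ - k * w τ)) τ := h1.mul (hw' τ hτ)
    convert h2 using 1
    ring
  intro t ht
  obtain ⟨ht0, htT⟩ := ht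
  have hsub : Set.Icc (0:ℝ) t ⊆ Set.Icc 0 T := Set.Icc_subset_Icc le_rfl htT
  have hdcont' : ContinuousOn d (Set.Icc 0 t) := hdcont.mono hsub
  have hintegrand_cont : ContinuousOn
      (fun τ => Real.exp (k * τ) * ((1 / (Z * C1)) * d τ)) (Set.Icc 0 t) :=
    ((Real.continuous_exp.comp (continuous_const.mul continuous_id)).continuousOn).mul
      (continuousOn_const.mul hdcont')
  have hint : IntervalIntegrable
      (fun τ => Real.exp (k * τ) * ((1 / (Z * C1)) * d τ)) MeasureTheory.volume 0 t := by
    apply ContinuousOn.intervalIntegrable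
    rwa [Set.uIcc_of_le ht0]
  -- FTC
  have hFTC : ∫ τ in (0:ℝ)..t, Real.exp (k * τ) * ((1 / (Z * C1)) * d τ) = v t - v 0 := by
    apply intervalIntegral.integral_eq_sub_of_hasDerivAt
    · intro τ hτ
      rw [Set.uIcc_of_le ht0] at hτ
      exact hv' τ (hsub hτ)
    · exact hint
  have hv0 : v 0 = 0 := by
    simp [hv_def, hw_def, hinit, hinithat]
  -- bound the integral
  have habs_bound : ‖∫ τ in (0:ℝ)..t, Real.exp (k * τ) * ((1 / (Z * C1)) * d τ)‖
      ≤ |∫ τ in (0:ℝ)..t, Real.exp (k * τ) * (M / (Z * C1))| := by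
    apply intervalIntegral.norm_integral_le_abs_of_norm_le
    · rw [MeasureTheory.ae_restrict_iff' measurableSet_uIoc]
      filter_upwards with τ hτ
      rw [Set.uIoc_of_le ht0] at hτ
      have hτ' : τ ∈ Set.Icc (0:ℝ) T := hsub ⟨le_of_lt hτ.1, hτ.2⟩
      have h1 : |d τ| ≤ M := hMle τ hτ'
      have h2 : (0:ℝ) < Z * C1 := by positivity
      rw [Real.norm_eq_abs, abs_mul, abs_mul]
      rw [abs_of_pos (Real.exp_pos _), abs_of_pos (by positivity : (0:ℝ) < 1/(Z*C1))]
      have : (1 / (Z * C1)) * |d τ| ≤ (1 / (Z * C1)) * M := by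
        apply mul_le_mul_of_nonneg_left h1 (by positivity)
      calc Real.exp (k * τ) * ((1 / (Z * C1)) * |d τ|)
          ≤ Real.exp (k * τ) * ((1 / (Z * C1)) * M) :=
            mul_le_mul_of_nonneg_left this (Real.exp_pos _).le
        _ = Real.exp (k * τ) * (M / (Z * C1)) := by ring
    · apply ContinuousOn.intervalIntegrable
      rw [Set.uIcc_of_le ht0]
      exact ((Real.continuous_exp.comp (continuous_const.mul continuous_id)).continuousOn).mul
        continuousOn_const
  -- compute the exponential integral
  have hexp_int : ∫ τ in (0:ℝ)..t, Real.exp (k * τ) * (M / (Z * C1))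
      = (M / (Z * C1)) * ((Real.exp (k * t) - 1) / k) := by
    have hF : ∀ τ ∈ Set.uIcc (0:ℝ) t,
        HasDerivAt (fun x => (M / (Z * C1)) * (Real.exp (k * x) / k))
          (Real.exp (k * τ) * (M / (Z * C1))) τ := by
      intro τ _
      have h1 : HasDerivAt (fun x => Real.exp (k * x)) (Real.exp (k * τ) * k) τ := by
        simpa using ((hasDerivAt_id τ).const_mul k).exp
      have h2 : HasDerivAt (fun x => (M / (Z * C1)) * (Real.exp (k * x) / k)) ((M / (Z * C1)) * (Real.exp (k * τ) * k / k)) τ := (h1.div_const k).const_mul (M / (Z * C1))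
      convert h2 using 1
      field_simp
    rw [intervalIntegral.integral_eq_sub_of_hasDerivAt hF]
    · simp
      field_simp
    · apply ContinuousOn.intervalIntegrable
      exact ((Real.continuous_exp.comp (continuous_const.mul continuous_id)).continuousOn).mul
        continuousOn_const
  -- combine
  have hvt : |v t| ≤ (M / (Z * C1)) * ((Real.exp (k * t) - 1) / k) := by
    have h1 := habs_bound
    rw [hFTC, hv0, sub_zero, Real.norm_eq_abs, hexp_int] at h1
    have hnn : 0 ≤ (M / (Z * C1)) * ((Real.exp (k * t) - 1) / k) := by
      have : (1:ℝ) ≤ Real.exp (k * t) := Real.one_le_exp (by positivity)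
      have h2 : 0 ≤ Real.exp (k * t) - 1 := by linarith
      positivity
    rwa [abs_of_nonneg hnn] at h1
  -- translate back to w
  have hwt : |w t| = |v t| / Real.exp (k * t) := by
    rw [hv_def]
    simp only [abs_mul, abs_of_pos (Real.exp_pos _)]
    field_simp
  have hconst : Z * C1 * k = 1 + Z * G1 := by
    rw [hk_def, ha_def]
    field_simp
    ring
  have hfinal : |w t| ≤ (1 / (1 + Z * G1)) * M := by
    rw [hwt]
    rw [div_le_iff₀ (Real.exp_pos _)]
    calc |v t| ≤ (M / (Z * C1)) * ((Real.exp (k * t) - 1) / k) := hvt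
      _ ≤ (1 / (1 + Z * G1)) * M * Real.exp (k * t) := by
          rw [← hconst, div_mul_div_comm]
          have h2 : 1 / (Z * C1 * k) * M * Real.exp (k * t)
              = M * Real.exp (k * t) / (Z * C1 * k) := by ring
          rw [h2]
          gcongr
          nlinarith [Real.exp_pos (k * t), hM0]
  exact hfinal
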